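/- Let Φ : D → ℝ be smooth on an open domain D ⊆ ℝⁿ with Hessian metric g_{ij} = ∂_i∂_j Φ invertible at every point, and suppose the Riemann curvature tensor of g, given by R_{abcd} = ∂_c∂_d g_{ab} − Σ_{e,f} g^{ef} ∂_c g_{af} ∂_d g_{eb}, vanishes identically. Then Φ satisfies the Associativity (WDVV) equations: for all indices a,b,c,d, Σ_{e,f} ∂_a∂_b∂_e Φ · g^{ef} · ∂_f∂_c∂_d Φ = Σ_{e,f} ∂_b∂_c∂_e Φ · g^{ef} · ∂_f∂_a∂_d Φ. -/

import Mathlib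

/-- The partial derivative of `f` in the `i`-th coordinate direction. -/
noncomputable def pd {n : ℕ} (i : Fin n) (f : (Fin n → ℝ) → ℝ) :
    (Fin n → ℝ) → ℝ :=
  fun x => fderiv ℝ f x (Pi.single i 1)

/-- `pd` of smooth functions on an open set is smooth. -/
lemma pd_contDiffOn {n : ℕ} {D : Set (Fin n → ℝ)} (hD : IsOpen D)
    {f : (Fin n → ℝ) → ℝ} (hf : ContDiffOn ℝ (⊤ : ℕ∞) f D) (i : Fin n) :
    ContDiffOn ℝ (⊤ : ℕ∞) (pd i f) D := by
  have h1 : ContDiffOn ℝ (⊤ : ℕ∞) (fun x => fderiv ℝ f x) D :=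
    hf.fderiv_of_isOpen hD (by simp)
  exact (ContinuousLinearMap.apply ℝ ℝ
    (Pi.single i 1 : Fin n → ℝ)).contDiff.comp_contDiffOn h1

/-- `pd` only depends on the germ. -/
lemma pd_congr_nhds {n : ℕ} {f h : (Fin n → ℝ) → ℝ} {x : Fin n → ℝ}
    (hfh : f =ᶠ[nhds x] h) (i : Fin n) : pd i f x = pd i h x := by
  simp only [pd, hfh.fderiv_eq]

/-- Schwarz symmetry of second partials on an open set. -/
lemma pd_comm {n : ℕ} {D : Set (Fin n → ℝ)} (hD : IsOpen D)
    {f : (Fin n → ℝ) → ℝ} (hf : ContDiffOn ℝ (⊤ : ℕ∞) f D)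
    {x : Fin n → ℝ} (hx : x ∈ D) (i j : Fin n) :
    pd i (pd j f) x = pd j (pd i f) x := by
  have hx' : D ∈ nhds x := hD.mem_nhds hx
  have hdf : ContDiffOn ℝ (⊤ : ℕ∞) (fun y => fderiv ℝ f y) D :=
    hf.fderiv_of_isOpen hD (by simp)
  have hdiff : DifferentiableAt ℝ (fun y => fderiv ℝ f y) x :=
    (hdf.contDiffAt hx').differentiableAt (by simp)
  have key : ∀ v w : Fin n → ℝ,
      fderiv ℝ (fun y => fderiv ℝ f y w) x v
        = fderiv ℝ (fderiv ℝ f) x v w := by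
    intro v w
    rw [fderiv_clm_apply hdiff (differentiableAt_const w)]
    simp
  have hsym : IsSymmSndFDerivAt ℝ f x :=
    (hf.contDiffAt hx').isSymmSndFDerivAt
      (by rw [minSmoothness_of_isRCLikeNormedField]; exact WithTop.coe_le_coe.mpr le_top)
  show fderiv ℝ (fun y => fderiv ℝ f y (Pi.single j 1)) x (Pi.single i 1)
      = fderiv ℝ (fun y => fderiv ℝ f y (Pi.single i 1)) x (Pi.single j 1)
  rw [key, key]
  exact hsym (Pi.single i 1) (Pi.single j 1)

/-- Pure algebra: the WDVV equations follow from the symmetry relation coming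
from flatness. -/
lemma wdvv_algebra {n : ℕ} (T : Fin n → Fin n → Fin n → ℝ)
    (G : Fin n → Fin n → ℝ)
    (hT12 : ∀ a b c, T a b c = T b a c)
    (hT23 : ∀ a b c, T a b c = T a c b)
    (hG : ∀ e f, G e f = G f e)
    (hyp : ∀ a b c d, (∑ e, ∑ f, G e f * T c a f * T d e b)
      = ∑ e, ∑ f, G e f * T d a f * T c e b)
    (a b c d : Fin n) :
    (∑ e, ∑ f, T a b e * G e f * T f c d)
      = ∑ e, ∑ f, T b c e * G e f * T f a d := by
  set S : Fin n → Fin n → Fin n → Fin n → ℝ :=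
    fun p q r s => ∑ e, ∑ f, T p q e * G e f * T r s f with hS
  have hcyc : ∀ p q r, T p q r = T q r p := by
    intro p q r; rw [hT12, hT23]
  have hpair : ∀ p q r s, S p q r s = S q p r s := by
    intro p q r s
    refine Finset.sum_congr rfl fun e _ => Finset.sum_congr rfl fun f _ => ?_
    rw [hT12 p q]
  have hconv : ∀ p q r s,
      (∑ e, ∑ f, G e f * T r p f * T s e q) = S r p s q := by
    intro p q r s
    rw [Finset.sum_comm]
    refine Finset.sum_congr rfl fun α _ => Finset.sum_congr rfl fun β _ => ?_
    rw [hG β α, hT23 s β q]; ring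
  have key : ∀ p q r s, S p q r s = S r q p s := by
    intro p q r s
    have h := hyp q s p r
    rw [hconv q s p r, hconv q s r p] at h
    exact h
  have goal : S a b c d = S b c a d := by
    calc S a b c d = S b a c d := hpair a b c d
      _ = S c a b d := key b a c d
      _ = S a c b d := hpair c a b d
      _ = S b c a d := key a c b d
  calc (∑ e, ∑ f, T a b e * G e f * T f c d)
      = S a b c d := by
        refine Finset.sum_congr rfl fun e _ => Finset.sum_congr rfl fun f _ => ?_
        rw [hcyc f c d]
    _ = S b c a d := goal
    _ = ∑ e, ∑ f, T b c e * G e f * T f a d := by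
        refine Finset.sum_congr rfl fun e _ => Finset.sum_congr rfl fun f _ => ?_
        rw [hcyc f a d]

/-- If the Hessian metric `g_{ij} = ∂_i∂_j Φ` of a smooth potential `Φ` is
invertible at every point of the open domain `D` and the curvature
`R_{abcd} = ∂_c∂_d g_{ab} − Σ_{e,f} g^{ef} ∂_c g_{af} ∂_d g_{eb}` vanishes
identically on `D`, then `Φ` satisfies the WDVV (Associativity) equations. -/
theorem wdvv_of_flat_hessian
    {n : ℕ} (D : Set (Fin n → ℝ)) (hD : IsOpen D)
    (Φ : (Fin n → ℝ) → ℝ) (hΦ : ContDiffOn ℝ (⊤ : ℕ∞) Φ D)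
    (g : (Fin n → ℝ) → Matrix (Fin n) (Fin n) ℝ)
    (hg : ∀ x, ∀ i j, g x i j = pd i (pd j Φ) x)
    (hginv : ∀ x ∈ D, IsUnit (g x).det)
    (hflat : ∀ x ∈ D, ∀ a b c d : Fin n,
      pd c (pd d (fun y => g y a b)) x
        - ∑ e, ∑ f, (g x)⁻¹ e f * pd c (fun y => g y a f) x
            * pd d (fun y => g y e b) x = 0) :
    ∀ x ∈ D, ∀ a b c d : Fin n,
      ∑ e, ∑ f, pd a (pd b (pd e Φ)) x * (g x)⁻¹ e f * pd f (pd c (pd d Φ)) x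
        = ∑ e, ∑ f, pd b (pd c (pd e Φ)) x * (g x)⁻¹ e f
            * pd f (pd a (pd d Φ)) x := by
  intro x hx a b c d
  have hgfun : ∀ i j, (fun y => g y i j) = pd i (pd j Φ) := by
    intro i j; funext y; exact hg y i j
  have hsm1 : ∀ e, ContDiffOn ℝ (⊤ : ℕ∞) (pd e Φ) D := fun e => pd_contDiffOn hD hΦ e
  have hsm2 : ∀ b e, ContDiffOn ℝ (⊤ : ℕ∞) (pd b (pd e Φ)) D :=
    fun b e => pd_contDiffOn hD (hsm1 e) b
  -- the third-derivative tensor at x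
  set T : Fin n → Fin n → Fin n → ℝ :=
    fun p q r => pd p (pd q (pd r Φ)) x with hT
  have hT12 : ∀ p q r, T p q r = T q p r :=
    fun p q r => pd_comm hD (hsm1 r) hx p q
  have hT23 : ∀ p q r, T p q r = T p r q := by
    intro p q r
    have hev : pd q (pd r Φ) =ᶠ[nhds x] pd r (pd q Φ) :=
      Filter.eventuallyEq_of_mem (hD.mem_nhds hx)
        (fun y hy => pd_comm hD hΦ hy q r)
    exact pd_congr_nhds hev p
  -- symmetry of g and of its inverse
  have hgsym : Matrix.transpose (g x) = g x := by
    ext i j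
    simp only [Matrix.transpose_apply, hg]
    exact pd_comm hD hΦ hx j i
  have hGsym : ∀ e f, (g x)⁻¹ e f = (g x)⁻¹ f e := by
    intro e f
    conv_lhs => rw [← hgsym]
    rw [← Matrix.transpose_nonsing_inv]
    rfl
  -- the flatness relation in terms of T
  have hyp : ∀ a b c d : Fin n,
      (∑ e, ∑ f, (g x)⁻¹ e f * T c a f * T d e b)
        = ∑ e, ∑ f, (g x)⁻¹ e f * T d a f * T c e b := by
    intro a b c d
    have h1 := hflat x hx a b c d
    have h2 := hflat x hx a b d c
    rw [sub_eq_zero] at h1 h2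
    simp only [hgfun] at h1 h2
    have hsch : pd c (pd d (pd a (pd b Φ))) x = pd d (pd c (pd a (pd b Φ))) x :=
      pd_comm hD (hsm2 a b) hx c d
    calc (∑ e, ∑ f, (g x)⁻¹ e f * T c a f * T d e b)
        = pd c (pd d (pd a (pd b Φ))) x := h1.symm
      _ = pd d (pd c (pd a (pd b Φ))) x := hsch
      _ = ∑ e, ∑ f, (g x)⁻¹ e f * T d a f * T c e b := h2
  exact wdvv_algebra T (fun e f => (g x)⁻¹ e f) hT12 hT23 hGsym hyp a b c d
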